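/- Completeness of JD_CS: for every axiomatically appropriate constant specification CS for JD and every formula A, if A is not derivable in the Hilbert system JD_CS then there exists a Fitting model M for JD_CS and a world w in M such that M,w ⊮ A. -/

import Mathlib

namespace JustificationLogic

/-- Justification terms: constants, variables, application, sum, and proof checker `!`. -/
inductive Term : Type
  | const : ℕ → Term
  | var : ℕ → Term
  | app : Term → Term → Term
  | sum : Term → Term → Term
  | bang : Term → Term
  deriving DecidableEq

/-- Formulas of justification logic: atoms, negation, implication, and `t : A`. -/
inductive Formula : Type
  | atom : ℕ → Formula
  | neg : Formula → Formula
  | impl : Formula → Formula → Formula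
  | just : Term → Formula → Formula
  deriving DecidableEq

/-- Disjunction, defined classically: `A ∨ B := ¬A → B`. -/
def Formula.or (A B : Formula) : Formula := (Formula.neg A).impl B

/-- Falsum, defined as the negation of a propositional tautology. -/
def Formula.falsum : Formula := Formula.neg ((Formula.atom 0).impl (Formula.atom 0))

/-- Number of symbols of a term. -/
def Term.size : Term → ℕ
  | .const _ => 1
  | .var _ => 1
  | .app s t => s.size + t.size + 1
  | .sum s t => s.size + t.size + 1
  | .bang t => t.size + 1

/-- Number of symbols of a formula. -/
def Formula.size : Formula → ℕ
  | .atom _ => 1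
  | .neg A => A.size + 1
  | .impl A B => A.size + B.size + 1
  | .just t A => t.size + A.size + 1

/-- An explicit numerical code for terms (an injective Gödel numbering). -/
def Term.code : Term → ℕ
  | .const n => Nat.pair 0 n
  | .var n => Nat.pair 1 n
  | .app s t => Nat.pair 2 (Nat.pair s.code t.code)
  | .sum s t => Nat.pair 3 (Nat.pair s.code t.code)
  | .bang t => Nat.pair 4 t.code

/-- An explicit numerical code for formulas (an injective Gödel numbering). -/
def Formula.code : Formula → ℕ
  | .atom n => Nat.pair 0 n
  | .neg A => Nat.pair 1 A.code
  | .impl A B => Nat.pair 2 (Nat.pair A.code B.code)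
  | .just t A => Nat.pair 3 (Nat.pair t.code A.code)

/-- Substitution of terms for term variables. -/
def Term.subst (σ : ℕ → Term) : Term → Term
  | .const n => .const n
  | .var n => σ n
  | .app s t => .app (s.subst σ) (t.subst σ)
  | .sum s t => .sum (s.subst σ) (t.subst σ)
  | .bang t => .bang (t.subst σ)

/-- Simultaneous substitution of terms for term variables and formulas for atoms. -/
def Formula.subst (σ : ℕ → Term) (τ : ℕ → Formula) : Formula → Formula
  | .atom n => τ n
  | .neg A => .neg (A.subst σ τ)
  | .impl A B => .impl (A.subst σ τ) (B.subst σ τ)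
  | .just t A => .just (t.subst σ) (A.subst σ τ)

/-- `towerT c n = !ⁿc`. -/
def towerT (c : Term) : ℕ → Term
  | 0 => c
  | n + 1 => Term.bang (towerT c n)

/-- `towerF c A n = !ⁿ⁻¹c : ⋯ : !c : c : A` (and `A` for `n = 0`), so that
`(towerT c n) : (towerF c A n)` is the `n`-th formula produced by the rule (AN!). -/
def towerF (c : Term) (A : Formula) : ℕ → Formula
  | 0 => A
  | n + 1 => Formula.just (towerT c n) (towerF c A n)

/-- The axioms of the justification logics considered, with switches `hd`, `ht`, `h4`
for the axioms (jd), (jt), (j4).  The propositional part (A1) is given by three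
standard Hilbert-style schemes axiomatizing classical propositional logic. -/
inductive Ax (hd ht h4 : Bool) : Formula → Prop
  | k (A B : Formula) : Ax hd ht h4 (A.impl (B.impl A))
  | s (A B C : Formula) :
      Ax hd ht h4 ((A.impl (B.impl C)).impl ((A.impl B).impl (A.impl C)))
  | dn (A B : Formula) :
      Ax hd ht h4 (((A.neg).impl (B.neg)).impl (B.impl A))
  | a2 (t s : Term) (A B : Formula) :
      Ax hd ht h4 ((Formula.just t (A.impl B)).impl
        ((Formula.just s A).impl (Formula.just (Term.app t s) B)))
  | a3 (t s : Term) (A : Formula) :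
      Ax hd ht h4 (((Formula.just t A).or (Formula.just s A)).impl
        (Formula.just (Term.sum t s) A))
  | jd (t : Term) : hd = true →
      Ax hd ht h4 ((Formula.just t Formula.falsum).impl Formula.falsum)
  | jt (t : Term) (A : Formula) : ht = true →
      Ax hd ht h4 ((Formula.just t A).impl A)
  | j4 (t : Term) (A : Formula) : h4 = true →
      Ax hd ht h4 ((Formula.just t A).impl
        (Formula.just (Term.bang t) (Formula.just t A)))

/-- Axioms of the respective logics. -/
def AxJ : Formula → Prop := Ax false false false
def AxJT : Formula → Prop := Ax false true false
def AxJD : Formula → Prop := Ax true false false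
def AxJ4 : Formula → Prop := Ax false false true
def AxJD4 : Formula → Prop := Ax true false true
def AxLP : Formula → Prop := Ax false true true

/-- `CS` is a constant specification for the logic with axioms `Axm`:
every member of `CS` is of the form `c : A` with `c` a constant and `A` an axiom. -/
def ConstSpec (Axm : Formula → Prop) (CS : Set Formula) : Prop :=
  ∀ F ∈ CS, ∃ (c : ℕ) (A : Formula), F = Formula.just (Term.const c) A ∧ Axm A

/-- `CS` is axiomatically appropriate for axioms `Axm`:
for every axiom `A` there is a constant `c` with `c : A ∈ CS`. -/
def AxApprop (Axm : Formula → Prop) (CS : Set Formula) : Prop :=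
  ∀ A : Formula, Axm A → ∃ c : ℕ, Formula.just (Term.const c) A ∈ CS

/-- `CS` is schematic: the set of axioms justified by a given constant consists of
axiom schemes, i.e. it is closed under simultaneous substitution of terms for term
variables and formulas for atomic propositions. -/
def Schematic (CS : Set Formula) : Prop :=
  ∀ (c : ℕ) (A : Formula), Formula.just (Term.const c) A ∈ CS →
    ∀ (σ : ℕ → Term) (τ : ℕ → Formula),
      Formula.just (Term.const c) (A.subst σ τ) ∈ CS

/-- `CS` is decidable: some computable function decides membership in `CS`
(via the explicit Gödel numbering of formulas). -/
def DecidableCS (CS : Set Formula) : Prop :=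
  ∃ C : ℕ → Bool, Computable C ∧ ∀ F : Formula, F ∈ CS ↔ C F.code = true

/-- Hilbert-style derivability with the iterated axiom necessitation rule (AN!):
from `c : A ∈ CS` infer `!ⁿc : !ⁿ⁻¹c : ⋯ : !c : c : A` for every `n ≥ 0`. -/
inductive DerivB (Axm : Formula → Prop) (CS : Set Formula) : Formula → Prop
  | ax {A : Formula} : Axm A → DerivB Axm CS A
  | mp {A B : Formula} : DerivB Axm CS (A.impl B) → DerivB Axm CS A → DerivB Axm CS B
  | an (c : ℕ) (A : Formula) (n : ℕ) :
      Formula.just (Term.const c) A ∈ CS →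
      DerivB Axm CS (Formula.just (towerT (Term.const c) n) (towerF (Term.const c) A n))

/-- Hilbert-style derivability with the simple axiom necessitation rule (AN):
from `c : A ∈ CS` infer `c : A`. -/
inductive DerivS (Axm : Formula → Prop) (CS : Set Formula) : Formula → Prop
  | ax {A : Formula} : Axm A → DerivS Axm CS A
  | mp {A B : Formula} : DerivS Axm CS (A.impl B) → DerivS Axm CS A → DerivS Axm CS B
  | an (c : ℕ) (A : Formula) :
      Formula.just (Term.const c) A ∈ CS →
      DerivS Axm CS (Formula.just (Term.const c) A)

/-- A structure for Fitting models: a nonempty set of worlds, an accessibility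
relation, an evidence relation and a valuation. -/
structure Model : Type 1 where
  World : Type
  nonempty : Nonempty World
  R : World → World → Prop
  E : Term → Formula → World → Prop
  val : ℕ → World → Prop

/-- The satisfaction relation `M, w ⊩ A`. -/
def Sat (M : Model) : Formula → M.World → Prop
  | .atom n, w => M.val n w
  | .neg A, w => ¬ Sat M A w
  | .impl A B, w => Sat M A w → Sat M B w
  | .just t A, w => M.E t A w ∧ ∀ v : M.World, M.R w v → Sat M A v

/-- The evidence relation of a model, as a set of triples. -/
def EvSet (M : Model) : Set (Term × Formula × M.World) :=
  {x | M.E x.1 x.2.1 x.2.2}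

/-- The graph of the valuation: the set `{(w, p) | w ∈ ν(p)}`. -/
def ValSet (M : Model) : Set (M.World × ℕ) :=
  {p | M.val p.2 p.1}

/-- Seriality of a relation: every world has a successor. -/
def Serial {W : Type} (R : W → W → Prop) : Prop := ∀ w : W, ∃ v : W, R w v

/-- Admissible evidence relation for the logics without the (j4) axiom:
closure under sum and application, and the constant specification condition
with iterated `!`. -/
def AdmissibleBang (CS : Set Formula) {W : Type}
    (E : Set (Term × Formula × W)) : Prop :=
  (∀ (s t : Term) (A : Formula) (w : W),
      ((s, A, w) ∈ E ∨ (t, A, w) ∈ E) → (Term.sum s t, A, w) ∈ E) ∧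
  (∀ (s t : Term) (A B : Formula) (w : W),
      (s, A.impl B, w) ∈ E → (t, A, w) ∈ E → (Term.app s t, B, w) ∈ E) ∧
  (∀ (c : ℕ) (A : Formula) (w : W) (n : ℕ),
      Formula.just (Term.const c) A ∈ CS →
      (towerT (Term.const c) n, towerF (Term.const c) A n, w) ∈ E)

/-- Admissible evidence relation for the logics with the (j4) axiom:
closure under sum and application, the simple constant specification condition,
closure under `!`, and monotonicity along the accessibility relation. -/
def AdmissibleJ4 (CS : Set Formula) {W : Type} (R : W → W → Prop)
    (E : Set (Term × Formula × W)) : Prop :=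
  (∀ (s t : Term) (A : Formula) (w : W),
      ((s, A, w) ∈ E ∨ (t, A, w) ∈ E) → (Term.sum s t, A, w) ∈ E) ∧
  (∀ (s t : Term) (A B : Formula) (w : W),
      (s, A.impl B, w) ∈ E → (t, A, w) ∈ E → (Term.app s t, B, w) ∈ E) ∧
  (∀ (c : ℕ) (A : Formula) (w : W),
      Formula.just (Term.const c) A ∈ CS → (Term.const c, A, w) ∈ E) ∧
  (∀ (t : Term) (A : Formula) (w : W),
      (t, A, w) ∈ E → (Term.bang t, Formula.just t A, w) ∈ E) ∧
  (∀ (t : Term) (A : Formula) (w v : W),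
      (t, A, w) ∈ E → R w v → (t, A, v) ∈ E)

/-- `M` is a Fitting model for `J_CS`. -/
def IsModelJ (CS : Set Formula) (M : Model) : Prop :=
  AdmissibleBang CS (EvSet M)

/-- `M` is a Fitting model for `JT_CS`: additionally `R` is reflexive. -/
def IsModelJT (CS : Set Formula) (M : Model) : Prop :=
  Reflexive M.R ∧ AdmissibleBang CS (EvSet M)

/-- `M` is a Fitting model for `JD_CS`: additionally `R` is serial. -/
def IsModelJD (CS : Set Formula) (M : Model) : Prop :=
  Serial M.R ∧ AdmissibleBang CS (EvSet M)

/-- `M` is a Fitting model for `J4_CS`: `R` is transitive. -/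
def IsModelJ4 (CS : Set Formula) (M : Model) : Prop :=
  Transitive M.R ∧ AdmissibleJ4 CS M.R (EvSet M)

/-- `M` is a Fitting model for `JD4_CS`: `R` is serial and transitive. -/
def IsModelJD4 (CS : Set Formula) (M : Model) : Prop :=
  Serial M.R ∧ Transitive M.R ∧ AdmissibleJ4 CS M.R (EvSet M)

/-- `M` is a Fitting model for `LP_CS`: `R` is reflexive and transitive. -/
def IsModelLP (CS : Set Formula) (M : Model) : Prop :=
  Reflexive M.R ∧ Transitive M.R ∧ AdmissibleJ4 CS M.R (EvSet M)

/-- `B` is a base for the evidence relation of `M`, and that evidence relation is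
minimal (least) among the admissible ones (non-(j4) version) containing `B`. -/
def MinBaseBang (CS : Set Formula) (M : Model)
    (B : Set (Term × Formula × M.World)) : Prop :=
  B ⊆ EvSet M ∧
  ∀ E' : Set (Term × Formula × M.World),
    AdmissibleBang CS E' → B ⊆ E' → EvSet M ⊆ E'

/-- `B` is a base for the evidence relation of `M`, and that evidence relation is
minimal (least) among the admissible ones ((j4) version) containing `B`. -/
def MinBaseJ4 (CS : Set Formula) (M : Model)
    (B : Set (Term × Formula × M.World)) : Prop :=
  B ⊆ EvSet M ∧
  ∀ E' : Set (Term × Formula × M.World),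
    AdmissibleJ4 CS M.R E' → B ⊆ E' → EvSet M ⊆ E'

/-- `M` is finitary (non-(j4) version): finitely many worlds, the evidence relation
is the minimal admissible one over some finite base, and the valuation has finite graph. -/
def FinitaryBang (CS : Set Formula) (M : Model) : Prop :=
  Finite M.World ∧
  (∃ B : Set (Term × Formula × M.World), B.Finite ∧ MinBaseBang CS M B) ∧
  (ValSet M).Finite

/-- `M` is finitary ((j4) version): finitely many worlds, the evidence relation
is the minimal admissible one over some finite base, and the valuation has finite graph. -/
def FinitaryJ4 (CS : Set Formula) (M : Model) : Prop :=
  Finite M.World ∧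
  (∃ B : Set (Term × Formula × M.World), B.Finite ∧ MinBaseJ4 CS M B) ∧
  (ValSet M).Finite

/-! Canonical model: worlds are the maximal consistent sets, `Γ R Δ` holds when `Δ` contains
every `B` with `t : B ∈ Γ`, and `t` is evidence for `B` at `Γ` when `t : B ∈ Γ`; by the truth lemma
a non-theorem `A` fails at any Lindenbaum extension of `{¬A}`. Internalization lifts a derivation
from `{B | ∃ t, t : B ∈ Γ}` to a justified derivation from `Γ`, so by (jd) that set is consistent
whenever `Γ` is, and its Lindenbaum extensions make `R` serial. -/

inductive DerivFrom (Axm : Formula → Prop) (CS Γ : Set Formula) : Formula → Prop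
  | thm {A : Formula} : DerivB Axm CS A → DerivFrom Axm CS Γ A
  | hyp {A : Formula} : A ∈ Γ → DerivFrom Axm CS Γ A
  | mp {A B : Formula} : DerivFrom Axm CS Γ (A.impl B) → DerivFrom Axm CS Γ A →
      DerivFrom Axm CS Γ B

def Consistent (Axm : Formula → Prop) (CS Γ : Set Formula) : Prop :=
  ¬ DerivFrom Axm CS Γ Formula.falsum

def MaxConsistent (Axm : Formula → Prop) (CS Γ : Set Formula) : Prop :=
  Consistent Axm CS Γ ∧ ∀ B : Formula, B ∈ Γ ∨ B.neg ∈ Γ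

def justified (Γ : Set Formula) : Set Formula :=
  {B | ∃ t : Term, Formula.just t B ∈ Γ}

section DerivFrom

variable {Axm : Formula → Prop} {CS Γ Δ : Set Formula} {A B : Formula}

lemma DerivFrom.mono (hΓΔ : Γ ⊆ Δ) (h : DerivFrom Axm CS Γ A) : DerivFrom Axm CS Δ A := by
  induction h with
  | thm h => exact .thm h
  | hyp h => exact .hyp (hΓΔ h)
  | mp _ _ ihAB ihA => exact ihAB.mp ihA

lemma DerivFrom.derivB_of_empty (h : DerivFrom Axm CS ∅ A) : DerivB Axm CS A := by
  induction h with
  | thm h => exact h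
  | hyp h => exact absurd h (Set.notMem_empty _)
  | mp _ _ ihAB ihA => exact ihAB.mp ihA

lemma DerivFrom.exists_finite (h : DerivFrom Axm CS Γ A) :
    ∃ F ⊆ Γ, F.Finite ∧ DerivFrom Axm CS F A := by
  induction h with
  | thm h => exact ⟨∅, Set.empty_subset _, Set.finite_empty, .thm h⟩
  | @hyp B h => exact ⟨{B}, Set.singleton_subset_iff.mpr h, Set.finite_singleton B, .hyp rfl⟩
  | mp _ _ ihAB ihA =>
    obtain ⟨F₁, hF₁, hF₁fin, hd₁⟩ := ihAB
    obtain ⟨F₂, hF₂, hF₂fin, hd₂⟩ := ihA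
    exact ⟨F₁ ∪ F₂, Set.union_subset hF₁ hF₂, hF₁fin.union hF₂fin,
      (hd₁.mono Set.subset_union_left).mp (hd₂.mono Set.subset_union_right)⟩

lemma isOfFiniteCharacter_consistent :
    Order.IsOfFiniteCharacter {Γ | Consistent Axm CS Γ} := fun _ =>
  ⟨fun hΓ _ hFΓ _ hF => hΓ (hF.mono hFΓ), fun hfin hΓ =>
    let ⟨F, hFΓ, hFfin, hF⟩ := hΓ.exists_finite
    hfin F hFΓ hFfin hF⟩

end DerivFrom

section Propositional

variable {hd ht h4 : Bool} {CS Γ : Set Formula} {A B : Formula}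

lemma DerivB.imp_self (A : Formula) : DerivB (Ax hd ht h4) CS (A.impl A) :=
  ((DerivB.ax (Ax.s A (A.impl A) A)).mp (DerivB.ax (Ax.k A (A.impl A)))).mp
    (DerivB.ax (Ax.k A A))

lemma DerivFrom.deduction (h : DerivFrom (Ax hd ht h4) CS (insert A Γ) B) :
    DerivFrom (Ax hd ht h4) CS Γ (A.impl B) := by
  induction h with
  | thm h => exact (DerivFrom.thm (.ax (Ax.k _ A))).mp (.thm h)
  | @hyp B h =>
    rcases h with rfl | h
    · exact .thm (DerivB.imp_self B)
    · exact (DerivFrom.thm (.ax (Ax.k B A))).mp (.hyp h)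
  | mp _ _ ihAB ihA => exact ((DerivFrom.thm (.ax (Ax.s A _ _))).mp ihAB).mp ihA

lemma DerivFrom.absurd (hA : DerivFrom (Ax hd ht h4) CS Γ A)
    (hnA : DerivFrom (Ax hd ht h4) CS Γ A.neg) : DerivFrom (Ax hd ht h4) CS Γ B :=
  ((DerivFrom.thm (.ax (Ax.dn B A))).mp
    ((DerivFrom.thm (.ax (Ax.k A.neg B.neg))).mp hnA)).mp hA

lemma DerivFrom.of_not_consistent_insert_neg
    (h : ¬ Consistent (Ax hd ht h4) CS (insert A.neg Γ)) : DerivFrom (Ax hd ht h4) CS Γ A :=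
  -- `falsum` is `¬(p → p)`, so (dn) turns `¬A → falsum` into `(p → p) → A`.
  let p := Formula.atom 0
  ((DerivFrom.thm (.ax (Ax.dn A (p.impl p)))).mp (not_not.mp h).deduction).mp
    (.thm (DerivB.imp_self p))

end Propositional

section MaxConsistent

variable {hd ht h4 : Bool} {CS Γ : Set Formula} {A B : Formula}

lemma MaxConsistent.mem_of_derivFrom (hΓ : MaxConsistent (Ax hd ht h4) CS Γ)
    (h : DerivFrom (Ax hd ht h4) CS Γ A) : A ∈ Γ :=
  (hΓ.2 A).resolve_right fun hnA => hΓ.1 (h.absurd (.hyp hnA))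

lemma MaxConsistent.neg_mem_iff (hΓ : MaxConsistent (Ax hd ht h4) CS Γ) :
    A.neg ∈ Γ ↔ A ∉ Γ :=
  ⟨fun hnA hA => hΓ.1 ((DerivFrom.hyp hA).absurd (.hyp hnA)), (hΓ.2 A).resolve_left⟩

lemma MaxConsistent.impl_mem_iff (hΓ : MaxConsistent (Ax hd ht h4) CS Γ) :
    A.impl B ∈ Γ ↔ (A ∈ Γ → B ∈ Γ) := by
  refine ⟨fun hAB hA => hΓ.mem_of_derivFrom ((DerivFrom.hyp hAB).mp (.hyp hA)), fun hAB => ?_⟩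
  by_cases hA : A ∈ Γ
  · exact hΓ.mem_of_derivFrom ((DerivFrom.thm (.ax (Ax.k B A))).mp (.hyp (hAB hA)))
  · have hnA : A.neg ∈ Γ := hΓ.neg_mem_iff.mpr hA
    exact hΓ.mem_of_derivFrom
      (DerivFrom.deduction ((DerivFrom.hyp (Set.mem_insert A Γ)).absurd
        (.hyp (Set.mem_insert_of_mem A hnA))))

lemma exists_maxConsistent_superset (hΓ : Consistent (Ax hd ht h4) CS Γ) :
    ∃ Δ, Γ ⊆ Δ ∧ MaxConsistent (Ax hd ht h4) CS Δ := by
  obtain ⟨Δ, hΓΔ, hΔ⟩ := isOfFiniteCharacter_consistent.exists_maximal (x := Γ) hΓ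
  refine ⟨Δ, hΓΔ, hΔ.1, fun B => or_iff_not_and_not.mpr fun ⟨hB, hnB⟩ => hΔ.1 ?_⟩
  have hincons : ∀ C ∉ Δ, ¬ Consistent (Ax hd ht h4) CS (insert C Δ) := fun C hC hcons =>
    hC (hΔ.2 hcons (Set.subset_insert C Δ) (Set.mem_insert C Δ))
  exact (DerivFrom.deduction (not_not.mp (hincons B hB))).mp
    (DerivFrom.of_not_consistent_insert_neg (hincons B.neg hnB))

end MaxConsistent

section Internalization

variable {hd ht h4 : Bool} {CS Γ : Set Formula} {A : Formula}

lemma DerivB.exists_just (hApp : AxApprop (Ax hd ht h4) CS) (h : DerivB (Ax hd ht h4) CS A) :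
    ∃ t : Term, DerivB (Ax hd ht h4) CS (Formula.just t A) := by
  induction h with
  | @ax A hA =>
    obtain ⟨c, hc⟩ := hApp A hA
    exact ⟨Term.const c, DerivB.an c A 0 hc⟩
  | @mp A B _ _ ihAB ihA =>
    obtain ⟨t, ht⟩ := ihAB
    obtain ⟨s, hs⟩ := ihA
    exact ⟨Term.app t s, ((DerivB.ax (Ax.a2 t s A B)).mp ht).mp hs⟩
  | an c A n hc => exact ⟨towerT (Term.const c) (n + 1), DerivB.an c A (n + 1) hc⟩

lemma DerivFrom.exists_just_of_justified (hApp : AxApprop (Ax hd ht h4) CS)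
    (h : DerivFrom (Ax hd ht h4) CS (justified Γ) A) :
    ∃ t : Term, DerivFrom (Ax hd ht h4) CS Γ (Formula.just t A) := by
  induction h with
  | thm h =>
    obtain ⟨t, ht⟩ := h.exists_just hApp
    exact ⟨t, .thm ht⟩
  | hyp h =>
    obtain ⟨t, ht⟩ := h
    exact ⟨t, .hyp ht⟩
  | @mp A B _ _ ihAB ihA =>
    obtain ⟨t, ht⟩ := ihAB
    obtain ⟨s, hs⟩ := ihA
    exact ⟨Term.app t s, ((DerivFrom.thm (.ax (Ax.a2 t s A B))).mp ht).mp hs⟩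

lemma Consistent.justified (hApp : AxApprop (Ax true ht h4) CS)
    (hΓ : Consistent (Ax true ht h4) CS Γ) : Consistent (Ax true ht h4) CS (justified Γ) :=
  fun h =>
    let ⟨t, ht⟩ := h.exists_just_of_justified hApp
    hΓ ((DerivFrom.thm (.ax (Ax.jd t rfl))).mp ht)

end Internalization

section Canonical

variable {hd ht h4 : Bool} {CS : Set Formula}

def canonicalModel (Axm : Formula → Prop) (CS : Set Formula)
    (h : ∃ Γ, MaxConsistent Axm CS Γ) : Model where
  World := {Γ : Set Formula // MaxConsistent Axm CS Γ}
  nonempty := let ⟨Γ, hΓ⟩ := h; ⟨⟨Γ, hΓ⟩⟩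
  R Γ Δ := justified Γ.1 ⊆ Δ.1
  E t B Γ := Formula.just t B ∈ Γ.1
  val n Γ := Formula.atom n ∈ Γ.1

lemma sat_canonicalModel_iff (h : ∃ Γ, MaxConsistent (Ax hd ht h4) CS Γ) (A : Formula)
    (Γ : (canonicalModel (Ax hd ht h4) CS h).World) :
    Sat (canonicalModel (Ax hd ht h4) CS h) A Γ ↔ A ∈ Γ.1 := by
  induction A generalizing Γ with
  | atom n => rfl
  | neg A ih => rw [Sat, ih, Γ.2.neg_mem_iff]
  | impl A B ihA ihB => rw [Sat, ihA, ihB, Γ.2.impl_mem_iff]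
  | just t A ih =>
    exact ⟨And.left, fun hA => ⟨hA, fun Δ hΓΔ => (ih Δ).mpr (hΓΔ ⟨t, hA⟩)⟩⟩

lemma serial_canonicalModel (hApp : AxApprop (Ax true ht h4) CS)
    (h : ∃ Γ, MaxConsistent (Ax true ht h4) CS Γ) :
    Serial (canonicalModel (Ax true ht h4) CS h).R := fun Γ =>
  let ⟨Δ, hΓΔ, hΔ⟩ := exists_maxConsistent_superset (Γ.2.1.justified hApp)
  ⟨⟨Δ, hΔ⟩, hΓΔ⟩

lemma admissibleBang_canonicalModel (h : ∃ Γ, MaxConsistent (Ax hd ht h4) CS Γ) :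
    AdmissibleBang CS (EvSet (canonicalModel (Ax hd ht h4) CS h)) := by
  refine ⟨fun s t A Γ hst => ?_, fun s t A B Γ hs ht => ?_, fun c A Γ n hc => ?_⟩
  · have hor : (Formula.just s A).or (Formula.just t A) ∈ Γ.1 := by
      refine Γ.2.impl_mem_iff.mpr fun hns => hst.resolve_left fun hs => ?_
      exact Γ.2.neg_mem_iff.mp hns hs
    exact Γ.2.impl_mem_iff.mp (Γ.2.mem_of_derivFrom (.thm (.ax (Ax.a3 s t A)))) hor
  · exact Γ.2.impl_mem_iff.mp
      (Γ.2.impl_mem_iff.mp (Γ.2.mem_of_derivFrom (.thm (.ax (Ax.a2 s t A B)))) hs) ht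
  · exact Γ.2.mem_of_derivFrom (.thm (DerivB.an c A n hc))

end Canonical

theorem completeness_JD_general (CS : Set Formula) (hApp : AxApprop AxJD CS) (A : Formula)
    (hA : ¬ DerivB AxJD CS A) :
    ∃ M : Model, IsModelJD CS M ∧ ∃ w : M.World, ¬ Sat M A w := by
  have hcons : Consistent (Ax true false false) CS (insert A.neg ∅) := fun h =>
    hA (DerivFrom.of_not_consistent_insert_neg (not_not.mpr h)).derivB_of_empty
  obtain ⟨Γ, hAΓ, hΓ⟩ := exists_maxConsistent_superset hcons
  have h : ∃ Γ, MaxConsistent (Ax true false false) CS Γ := ⟨Γ, hΓ⟩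
  refine ⟨canonicalModel _ CS h,
    ⟨serial_canonicalModel hApp h, admissibleBang_canonicalModel h⟩, ⟨Γ, hΓ⟩, ?_⟩
  exact fun hsat => hΓ.neg_mem_iff.mp (hAΓ (Set.mem_insert _ _))
    ((sat_canonicalModel_iff h A ⟨Γ, hΓ⟩).mp hsat)

/-- Completeness of `JD_CS`: if a formula is not derivable in the Hilbert system
`JD_CS` (with axiomatically appropriate constant specification `CS`), then it fails at some world
of some Fitting model for `JD_CS`. -/
theorem completeness_JD (CS : Set Formula) (hCS : ConstSpec AxJD CS) (hApp : AxApprop AxJD CS) (A : Formula)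
    (hA : ¬ DerivB AxJD CS A) :
    ∃ M : Model, IsModelJD CS M ∧ ∃ w : M.World, ¬ Sat M A w :=
  completeness_JD_general CS hApp A hA

end JustificationLogic
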